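/- Let U, V be symmetric positive-definite real 3×3 matrices with U ≠ V, suppose U V = V U, suppose the eigenvalues of U are pairwise distinct, and suppose there exists a unit vector ê ∈ ℝ³ such that V = (−I + 2 ê⊗ê) U (−I + 2 ê⊗ê). Then ê is perpendicular to some eigenvector of U (hence U and V form compound domains). -/
import Mathlib


open Matrix

noncomputable section

abbrev V3 : Type := Fin 3 → ℝ
abbrev M3 : Type := Matrix (Fin 3) (Fin 3) ℝ

/-- Rank-one matrix `a ⊗ n` with entries `aᵢ nⱼ`. -/
def outer (a n : V3) : M3 := Matrix.vecMulVec a n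


lemma outer_mulVec (e x : V3) : (outer e e).mulVec x = (e ⬝ᵥ x) • e := by
  funext i
  simp [outer, vecMulVec, Matrix.mulVec, dotProduct, Finset.mul_sum, mul_comm, Pi.smul_apply,
    smul_eq_mul, Finset.sum_mul]
  ring_nf
  rw [Finset.sum_congr rfl]
  intros; ring

lemma R_mulVec (e x : V3) :
    (-1 + (2 : ℝ) • outer e e).mulVec x = (2 * (e ⬝ᵥ x)) • e - x := by
  rw [Matrix.add_mulVec, Matrix.neg_mulVec, Matrix.one_mulVec, Matrix.smul_mulVec,
    outer_mulVec, smul_smul]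
  abel

lemma sym_dot (U : M3) (hUsym : Uᵀ = U) (l : ℝ) (u w : V3) (hu : U.mulVec u = l • u) :
    u ⬝ᵥ U.mulVec w = l * (u ⬝ᵥ w) := by
  rw [Matrix.dotProduct_mulVec, ← Matrix.mulVec_transpose, hUsym, hu, smul_dotProduct]
  rfl

lemma offdiag (U V : M3) (hUsym : Uᵀ = U) (hcomm : U * V = V * U)
    (li lj : ℝ) (ui uj : V3) (hUi : U.mulVec ui = li • ui) (hUj : U.mulVec uj = lj • uj)
    (hij : lj ≠ li) : uj ⬝ᵥ V.mulVec ui = 0 := by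
  have h1 : U.mulVec (V.mulVec ui) = li • V.mulVec ui := by
    rw [Matrix.mulVec_mulVec, hcomm, ← Matrix.mulVec_mulVec, hUi, Matrix.mulVec_smul]
  have h2 : uj ⬝ᵥ U.mulVec (V.mulVec ui) = lj * (uj ⬝ᵥ V.mulVec ui) :=
    sym_dot U hUsym lj uj _ hUj
  rw [h1, dotProduct_smul, smul_eq_mul] at h2
  have := sub_eq_zero.mpr h2
  rw [← sub_mul] at this
  rcases mul_eq_zero.mp this with h | h
  · exact absurd (sub_eq_zero.mp h).symm hij
  · exact h

lemma dotV (U : M3) (hUsym : Uᵀ = U) (e : V3)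
    (li lj : ℝ) (ui uj : V3) (hUi : U.mulVec ui = li • ui) (hUj : U.mulVec uj = lj • uj)
    (hoij : uj ⬝ᵥ ui = 0) :
    uj ⬝ᵥ ((-1 + (2 : ℝ) • outer e e) * U * (-1 + (2 : ℝ) • outer e e)).mulVec ui
      = 2 * (e ⬝ᵥ ui) * (e ⬝ᵥ uj) * (2 * (e ⬝ᵥ U.mulVec e) - li - lj) := by
  have key : ((-1 + (2 : ℝ) • outer e e) * U * (-1 + (2 : ℝ) • outer e e)).mulVec ui
      = (-1 + (2 : ℝ) • outer e e).mulVec (U.mulVec ((-1 + (2 : ℝ) • outer e e).mulVec ui)) := by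
    rw [Matrix.mulVec_mulVec, Matrix.mulVec_mulVec]
  rw [key, R_mulVec e ui, Matrix.mulVec_sub, Matrix.mulVec_smul, hUi, R_mulVec]
  have hd1 : e ⬝ᵥ ((2 * (e ⬝ᵥ ui)) • U.mulVec e - li • ui)
      = 2 * (e ⬝ᵥ ui) * (e ⬝ᵥ U.mulVec e) - li * (e ⬝ᵥ ui) := by
    rw [dotProduct_sub, dotProduct_smul, dotProduct_smul]; simp [mul_comm]
  rw [hd1]
  have hjUe : uj ⬝ᵥ U.mulVec e = lj * (e ⬝ᵥ uj) := by
    rw [sym_dot U hUsym lj uj e hUj, dotProduct_comm]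
  rw [dotProduct_sub, dotProduct_sub, dotProduct_smul, dotProduct_smul, dotProduct_smul,
    hjUe, hoij, dotProduct_comm uj e]
  simp only [smul_eq_mul]
  ring

/-- **Commuting compatible variants form compound domains.** If `U ≠ V` are
symmetric positive definite, commute, the eigenvalues of `U` are pairwise
distinct, and `V = (−I+2ê⊗ê)U(−I+2ê⊗ê)` for a unit vector `ê`, then `ê` is
perpendicular to an eigenvector of `U`. -/
theorem commuting_variants_form_compound_domains
    (U V : M3) (hU : U.PosDef) (hV : V.PosDef) (hUV : U ≠ V)
    (hcomm : U * V = V * U)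
    (l1 l2 l3 : ℝ) (h12 : l1 ≠ l2) (h13 : l1 ≠ l3) (h23 : l2 ≠ l3)
    (u1 u2 u3 : V3)
    (hUu1 : U.mulVec u1 = l1 • u1) (hUu2 : U.mulVec u2 = l2 • u2)
    (hUu3 : U.mulVec u3 = l3 • u3)
    (hn1 : u1 ⬝ᵥ u1 = 1) (hn2 : u2 ⬝ᵥ u2 = 1) (hn3 : u3 ⬝ᵥ u3 = 1)
    (ho12 : u1 ⬝ᵥ u2 = 0) (ho13 : u1 ⬝ᵥ u3 = 0) (ho23 : u2 ⬝ᵥ u3 = 0)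
    (e : V3) (he : e ⬝ᵥ e = 1)
    (hrel : V = (-1 + (2 : ℝ) • outer e e) * U * (-1 + (2 : ℝ) • outer e e)) :
    ∃ u : V3, u ≠ 0 ∧ (∃ μ : ℝ, U.mulVec u = μ • u) ∧ e ⬝ᵥ u = 0 := by
  have hUsym : Uᵀ = U := hU.isHermitian.eq
  have nz : ∀ u : V3, u ⬝ᵥ u = 1 → u ≠ 0 := by
    intro u hu h
    rw [h, zero_dotProduct] at hu
    exact one_ne_zero hu.symm
  by_cases hc1 : e ⬝ᵥ u1 = 0
  · exact ⟨u1, nz u1 hn1, ⟨l1, hUu1⟩, hc1⟩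
  by_cases hc2 : e ⬝ᵥ u2 = 0
  · exact ⟨u2, nz u2 hn2, ⟨l2, hUu2⟩, hc2⟩
  by_cases hc3 : e ⬝ᵥ u3 = 0
  · exact ⟨u3, nz u3 hn3, ⟨l3, hUu3⟩, hc3⟩
  exfalso
  have E12 : 2 * (e ⬝ᵥ u1) * (e ⬝ᵥ u2) * (2 * (e ⬝ᵥ U.mulVec e) - l1 - l2) = 0 := by
    rw [← dotV U hUsym e l1 l2 u1 u2 hUu1 hUu2 (by rw [dotProduct_comm]; exact ho12), ← hrel]
    exact offdiag U V hUsym hcomm l1 l2 u1 u2 hUu1 hUu2 (Ne.symm h12)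
  have E13 : 2 * (e ⬝ᵥ u1) * (e ⬝ᵥ u3) * (2 * (e ⬝ᵥ U.mulVec e) - l1 - l3) = 0 := by
    rw [← dotV U hUsym e l1 l3 u1 u3 hUu1 hUu3 (by rw [dotProduct_comm]; exact ho13), ← hrel]
    exact offdiag U V hUsym hcomm l1 l3 u1 u3 hUu1 hUu3 (Ne.symm h13)
  have q12 : 2 * (e ⬝ᵥ U.mulVec e) - l1 - l2 = 0 := by
    rcases mul_eq_zero.mp E12 with h | h
    · rcases mul_eq_zero.mp h with h' | h'
      · rcases mul_eq_zero.mp h' with h'' | h''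
        · norm_num at h''
        · exact absurd h'' hc1
      · exact absurd h' hc2
    · exact h
  have q13 : 2 * (e ⬝ᵥ U.mulVec e) - l1 - l3 = 0 := by
    rcases mul_eq_zero.mp E13 with h | h
    · rcases mul_eq_zero.mp h with h' | h'
      · rcases mul_eq_zero.mp h' with h'' | h''
        · norm_num at h''
        · exact absurd h'' hc1
      · exact absurd h' hc3
    · exact h
  exact h23 (by linarith)
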